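/- Let f be a probability density on [-1,1] supported there, and for t, x with 0 < t < 1 and x > 1 let q denote the conditional density of Y ~ N(x,t) given |Y| \le 1. Then for any constant C' > 0, P_{y ~ q}(y < 1 - \sqrt{2C' t \log(1/t)}) < t^{C'}. -/

import Mathlib

/-!
For `y < 1 - s` we have `x - y - s > x - 1 > 0`, so shifting `y` by `s` towards `1` raises the
Gaussian weight `φ_t(x - y)` by the factor `exp ((2 (x - y - s) s + s²) / 2t) > exp (s² / 2t)`.
Hence the mass of `[-1, 1 - s)` is less than `exp (-s² / 2t)` times the mass of
`[-1 + s, 1] ⊆ [-1, 1]`, and `exp (-s² / 2t) = t ^ C'` for `s = √(2 C' t log (1/t))`.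
-/

open MeasureTheory Real

/-- Density of `N(0,t)`. -/
noncomputable def gaussDensity (t x : ℝ) : ℝ :=
  (Real.sqrt (2 * Real.pi * t))⁻¹ * Real.exp (-x ^ 2 / (2 * t))

open Set

theorem gaussDensity_nonneg (t x : ℝ) : 0 ≤ gaussDensity t x := by
  unfold gaussDensity; positivity

theorem gaussDensity_pos {t : ℝ} (ht : 0 < t) (x : ℝ) : 0 < gaussDensity t x := by
  unfold gaussDensity; positivity

theorem continuous_gaussDensity (t : ℝ) : Continuous (gaussDensity t) := by
  unfold gaussDensity; fun_prop

theorem gaussDensity_add (t a s : ℝ) :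
    gaussDensity t (a + s) = exp (-(2 * a * s + s ^ 2) / (2 * t)) * gaussDensity t a := by
  rw [gaussDensity, gaussDensity, mul_left_comm, ← exp_add]
  ring_nf

theorem gaussDensity_add_le {t a c s : ℝ} (ht : 0 ≤ t) (hca : c ≤ a) (hs : 0 ≤ s) :
    gaussDensity t (a + s) ≤ exp (-(2 * c * s + s ^ 2) / (2 * t)) * gaussDensity t a := by
  rw [gaussDensity_add]
  gcongr
  exact gaussDensity_nonneg t a

theorem setIntegral_Icc_gaussDensity_pos {t a b : ℝ} (ht : 0 < t) (hab : a < b) (x : ℝ) :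
    0 < ∫ y in Icc a b, gaussDensity t (x - y) := by
  rw [integral_Icc_eq_integral_Ioc, ← intervalIntegral.integral_of_le hab.le]
  exact intervalIntegral.intervalIntegral_pos_of_pos_on
    (((continuous_gaussDensity t).comp (continuous_sub_left x)).intervalIntegrable _ _)
    (fun y _ => gaussDensity_pos ht _) hab

theorem setIntegral_Ico_le_mul_setIntegral_Icc_of_le_shift {g : ℝ → ℝ} {a b s E : ℝ}
    (hg : IntegrableOn g (Icc a b)) (hg0 : ∀ y ∈ Icc a b, 0 ≤ g y) (hs : 0 ≤ s) (hE : 0 ≤ E)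
    (hshift : ∀ y ∈ Ico a (b - s), g y ≤ E * g (y + s)) :
    ∫ y in Ico a (b - s), g y ≤ E * ∫ y in Icc a b, g y := by
  have hsub : Ico (a + s) b ⊆ Icc a b := fun y hy => ⟨by linarith [hy.1], hy.2.le⟩
  have htrans : ∫ y in Ico a (b - s), g (y + s) = ∫ y in Ico (a + s) b, g y := by
    have := (measurePreserving_add_right volume s).setIntegral_preimage_emb
      (measurableEmbedding_addRight s) g (Ico (a + s) b)
    rwa [preimage_add_const_Ico, add_sub_cancel_right] at this
  have hint : IntegrableOn (fun y => g (y + s)) (Ico a (b - s)) := by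
    have := ((measurePreserving_add_right volume s).integrableOn_comp_preimage
      (measurableEmbedding_addRight s)).2 (hg.mono_set hsub)
    rwa [preimage_add_const_Ico, add_sub_cancel_right] at this
  calc ∫ y in Ico a (b - s), g y ≤ ∫ y in Ico a (b - s), E * g (y + s) :=
        setIntegral_mono_on (hg.mono_set fun y hy => ⟨hy.1, by linarith [hy.2]⟩)
          (hint.const_mul E) measurableSet_Ico hshift
    _ = E * ∫ y in Ico (a + s) b, g y := by rw [integral_const_mul, htrans]
    _ ≤ E * ∫ y in Icc a b, g y :=
        mul_le_mul_of_nonneg_left (setIntegral_mono_set hg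
          (ae_restrict_of_forall_mem measurableSet_Icc hg0) hsub.eventuallyLE) hE

/-- For `0 < t < 1`, `x > 1`, and the conditional density `q` of `Y ~ N(x,t)` given `|Y| ≤ 1`
(so that probabilities under `q` are ratios of Gaussian integrals over subsets of `[-1,1]`),
for any constant `C' > 0`: `P_{y~q}(y < 1 - √(2C' t log(1/t))) < t^{C'}`. -/
theorem conditional_tail_bound (t x C' : ℝ) (ht0 : 0 < t) (ht1 : t < 1)
    (hx : 1 < x) (hC' : 0 < C') :
    (∫ y in Set.Ico (-1 : ℝ) (1 - Real.sqrt (2 * C' * t * Real.log (1 / t))),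
        gaussDensity t (x - y)) /
      (∫ y in Set.Icc (-1 : ℝ) 1, gaussDensity t (x - y))
      < t ^ C' := by
  set s := Real.sqrt (2 * C' * t * Real.log (1 / t))
  have hlog : 0 < Real.log (1 / t) := Real.log_pos (one_lt_one_div ht0 ht1)
  have hs : 0 < s := Real.sqrt_pos.mpr (by positivity)
  have hexp : exp (-s ^ 2 / (2 * t)) = t ^ C' := by
    rw [Real.sq_sqrt (by positivity), rpow_def_of_pos ht0, one_div, Real.log_inv]
    congr 1
    field_simp
  have hnum : ∫ y in Ico (-1) (1 - s), gaussDensity t (x - y) ≤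
      exp (-(2 * (x - 1) * s + s ^ 2) / (2 * t)) * ∫ y in Icc (-1) 1, gaussDensity t (x - y) := by
    refine setIntegral_Ico_le_mul_setIntegral_Icc_of_le_shift
      ((continuous_gaussDensity t).comp (continuous_sub_left x)).integrableOn_Icc
      (fun y _ => gaussDensity_nonneg t _) hs.le (exp_nonneg _) fun y hy => ?_
    have := gaussDensity_add_le (a := x - y - s) (c := x - 1) ht0.le (by linarith [hy.2]) hs.le
    rwa [sub_add_cancel, sub_sub] at this
  calc _ ≤ exp (-(2 * (x - 1) * s + s ^ 2) / (2 * t)) :=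
        (div_le_iff₀ (setIntegral_Icc_gaussDensity_pos ht0 (by norm_num) x)).2 hnum
    _ < exp (-s ^ 2 / (2 * t)) := by
        gcongr
        nlinarith
    _ = t ^ C' := hexp
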